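/- arXiv:1610.09730 — 4 statements merged into one kernel-verified Lean document; each statement's English description precedes it below -/
import Mathlib

section
/- Let Z₁, Z₂, ... be i.i.d. random variables with |Z_i| ≤ 2, E[Z_i] = 0 and Var(Z_i) = σ². Define V_n = (n/(n−1))·(∑_{i=1}^n Z_i² − (1/n)(∑_{i=1}^n Z_i)²). Then for any n ≥ 2 and δ > 0, with probability at least 1 − δ, V_n ≤ 4nσ² + 8·ln(1/δ). -/
open MeasureTheory ProbabilityTheory

/-!
The squares `Z_i² ∈ [0, 4]` are i.i.d. with mean `σ²`. By convexity of `exp` on `[0, 1]`,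
a random variable `Y ∈ [0, b]` has `E[exp(Y/b)] ≤ exp((e - 1) E[Y] / b)`, so the Chernoff bound at
`t = 1/b` gives `∑ Y_i < 2 n E[Y] + b ln(1/δ)` with probability at least `1 - δ`, because
`e - 1 ≤ 2`. Finally `V_n ≤ 2 ∑ Z_i²`, since `n/(n-1) ≤ 2` for `n ≥ 2`.
-/

namespace Real

lemma exp_le_one_add_mul_of_mem_Icc {x : ℝ} (hx : x ∈ Set.Icc (0 : ℝ) 1) :
    exp x ≤ 1 + (exp 1 - 1) * x := by
  have h := convexOn_exp.2 (Set.mem_univ 0) (Set.mem_univ 1) (sub_nonneg.2 hx.2) hx.1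
    (sub_add_cancel 1 x)
  simp only [smul_eq_mul, mul_zero, mul_one, zero_add, exp_zero] at h
  linarith

end Real

section Probability

variable {Ω : Type*} [MeasurableSpace Ω] {μ : Measure Ω}

lemma ofReal_one_sub_le_measure_compl [IsProbabilityMeasure μ] {s : Set Ω} {δ : ℝ}
    (hs : NullMeasurableSet s μ) (h : μ.real s ≤ δ) : ENNReal.ofReal (1 - δ) ≤ μ sᶜ := by
  apply ENNReal.ofReal_le_of_le_toReal
  rw [← measureReal_def, probReal_compl_eq_one_sub₀ hs]
  linarith

lemma mgf_le_exp_of_mul_mem_Icc [IsProbabilityMeasure μ] {X : Ω → ℝ} {t : ℝ}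
    (hX : Integrable X μ) (hbdd : ∀ᵐ ω ∂μ, t * X ω ∈ Set.Icc (0 : ℝ) 1) :
    mgf X μ t ≤ Real.exp ((Real.exp 1 - 1) * t * μ[X]) :=
  calc mgf X μ t ≤ ∫ ω, (1 + (Real.exp 1 - 1) * t * X ω) ∂μ := by
        refine integral_mono_of_nonneg (.of_forall fun ω => (Real.exp_pos _).le)
          ((integrable_const 1).add (hX.const_mul _)) ?_
        filter_upwards [hbdd] with ω hω
        simpa only [mul_assoc] using Real.exp_le_one_add_mul_of_mem_Icc hω
    _ = 1 + (Real.exp 1 - 1) * t * μ[X] := by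
        rw [integral_add (integrable_const _) (hX.const_mul _), integral_const_mul]
        simp
    _ ≤ Real.exp ((Real.exp 1 - 1) * t * μ[X]) := by
        linarith [Real.add_one_le_exp ((Real.exp 1 - 1) * t * μ[X])]

lemma measureReal_sum_ge_le_of_mem_Icc [IsProbabilityMeasure μ] {ι : Type*}
    {Y : ι → Ω → ℝ} {s : Finset ι} {j : ι} {b δ : ℝ}
    (hmeas : ∀ i, AEMeasurable (Y i) μ) (hindep : iIndepFun Y μ)
    (hident : ∀ i ∈ s, ∀ k ∈ s, IdentDistrib (Y i) (Y k) μ μ) (hj : j ∈ s)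
    (hbdd : ∀ i ω, Y i ω ∈ Set.Icc 0 b) (hb : 0 < b) (hδ : 0 < δ) :
    μ.real {ω | 2 * s.card * μ[Y j] + b * Real.log (1 / δ) ≤ ∑ i ∈ s, Y i ω} ≤ δ := by
  have hYj : Integrable (Y j) μ :=
    .of_bound (hmeas j).aestronglyMeasurable b
      (.of_forall fun ω => by rw [Real.norm_of_nonneg (hbdd j ω).1]; exact (hbdd j ω).2)
  have hmean : 0 ≤ μ[Y j] := integral_nonneg fun ω => (hbdd j ω).1
  have hscaled : ∀ i ω, b⁻¹ * Y i ω ∈ Set.Icc (0 : ℝ) 1 := fun i ω =>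
    ⟨by positivity [(hbdd i ω).1], inv_mul_le_one_of_le₀ (hbdd i ω).2 hb.le⟩
  have hmgf :
      mgf (∑ i ∈ s, Y i) μ b⁻¹ ≤ Real.exp (s.card * ((Real.exp 1 - 1) * b⁻¹ * μ[Y j])) := by
    rw [mgf_sum_of_identDistrib₀ hmeas hindep hident hj, Real.exp_nat_mul]
    exact pow_le_pow_left₀ mgf_nonneg (mgf_le_exp_of_mul_mem_Icc hYj (.of_forall (hscaled j))) _
  have hint : Integrable (fun ω => Real.exp (b⁻¹ * (∑ i ∈ s, Y i) ω)) μ := by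
    have hsum : AEMeasurable (∑ i ∈ s, Y i) μ := Finset.aemeasurable_sum _ fun i _ => hmeas i
    refine .of_bound (hsum.const_mul _).exp.aestronglyMeasurable (Real.exp s.card)
      (.of_forall fun ω => ?_)
    rw [Real.norm_of_nonneg (Real.exp_pos _).le, Real.exp_le_exp, Finset.sum_apply, Finset.mul_sum]
    simpa using Finset.sum_le_sum fun i (_ : i ∈ s) => (hscaled i ω).2
  have hexp_one : Real.exp 1 - 1 ≤ 2 := by linarith [Real.exp_one_lt_d9]
  have hcount : 0 ≤ (s.card : ℝ) * μ[Y j] := mul_nonneg (Nat.cast_nonneg _) hmean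
  calc μ.real {ω | 2 * s.card * μ[Y j] + b * Real.log (1 / δ) ≤ ∑ i ∈ s, Y i ω}
      ≤ Real.exp (-b⁻¹ * (2 * s.card * μ[Y j] + b * Real.log (1 / δ))) *
          mgf (∑ i ∈ s, Y i) μ b⁻¹ := by
        simpa only [Finset.sum_apply] using measure_ge_le_exp_mul_mgf _ (inv_nonneg.2 hb.le) hint
    _ ≤ Real.exp (-b⁻¹ * (2 * s.card * μ[Y j] + b * Real.log (1 / δ))) *
          Real.exp (s.card * ((Real.exp 1 - 1) * b⁻¹ * μ[Y j])) := by gcongr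
    _ ≤ Real.exp (Real.log δ) := by
        rw [← Real.exp_add, Real.exp_le_exp, one_div, Real.log_inv]
        field_simp
        nlinarith [mul_le_mul_of_nonneg_left hexp_one hcount]
    _ = δ := Real.exp_log hδ

end Probability

lemma div_sub_one_mul_sub_sq_le_two_mul {a A B : ℝ} (ha : 2 ≤ a) (hA : 0 ≤ A) :
    a / (a - 1) * (A - 1 / a * B ^ 2) ≤ 2 * A := by
  have hratio : a / (a - 1) ≤ 2 := by rw [div_le_iff₀ (by linarith)]; linarith
  have hdiff : A - 1 / a * B ^ 2 ≤ A := sub_le_self _ (by positivity)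
  calc a / (a - 1) * (A - 1 / a * B ^ 2) ≤ a / (a - 1) * A := by
        gcongr
        exact div_nonneg (by linarith) (by linarith)
    _ ≤ 2 * A := by gcongr

theorem stmt6_general {Ω : Type*} [MeasurableSpace Ω] (μ : Measure Ω) [IsProbabilityMeasure μ]
    (Z : ℕ → Ω → ℝ)
    (hindep : iIndepFun Z μ)
    (hident : ∀ i, IdentDistrib (Z i) (Z 0) μ μ)
    (hbdd : ∀ i ω, |Z i ω| ≤ 2) (hmean : μ[Z 0] = 0)
    (n : ℕ) (hn : 2 ≤ n) (δ : ℝ) (hδ : 0 < δ) :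
    ENNReal.ofReal (1 - δ) ≤
      μ {ω | ((n : ℝ) / ((n : ℝ) - 1)) *
          ((∑ i ∈ Finset.range n, (Z i ω) ^ 2) -
            (1 / (n : ℝ)) * (∑ i ∈ Finset.range n, Z i ω) ^ 2) ≤
          4 * (n : ℝ) * variance (Z 0) μ + 8 * Real.log (1 / δ)} := by
  set Y : ℕ → Ω → ℝ := fun i ω => Z i ω ^ 2
  have hmeas : ∀ i, AEMeasurable (Y i) μ := fun i => (hident i).aemeasurable_fst.pow_const 2
  have hYbdd : ∀ i ω, Y i ω ∈ Set.Icc (0 : ℝ) 4 := fun i ω =>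
    ⟨sq_nonneg _, by nlinarith [sq_abs (Z i ω), abs_nonneg (Z i ω), hbdd i ω]⟩
  have hYident : ∀ i ∈ Finset.range n, ∀ k ∈ Finset.range n, IdentDistrib (Y i) (Y k) μ μ :=
    fun i _ k _ =>
      ((hident i).trans (hident k).symm).comp (by fun_prop : Measurable fun x : ℝ => x ^ 2)
  have hvar : variance (Z 0) μ = μ[Y 0] :=
    variance_of_integral_eq_zero (hident 0).aemeasurable_fst hmean
  have htail := measureReal_sum_ge_le_of_mem_Icc hmeas
    (hindep.comp (fun _ x => x ^ 2) fun _ => by fun_prop) hYident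
    (j := 0) (Finset.mem_range.2 (by omega)) hYbdd four_pos hδ
  refine (ofReal_one_sub_le_measure_compl ?_ htail).trans (measure_mono fun ω hω => ?_)
  · exact nullMeasurableSet_le aemeasurable_const
      (Finset.aemeasurable_fun_sum _ fun i _ => hmeas i)
  have hV := div_sub_one_mul_sub_sq_le_two_mul (a := n) (B := ∑ i ∈ Finset.range n, Z i ω)
    (by exact_mod_cast hn) (Finset.sum_nonneg fun i (_ : i ∈ Finset.range n) => (hYbdd i ω).1)
  simp only [Set.mem_compl_iff, Set.mem_ofPred_eq, not_le, Finset.card_range] at hω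
  simp only [Set.mem_ofPred_eq, hvar]
  linarith

/-- For i.i.d. `Z_i` with `|Z_i| ≤ 2`, mean zero and variance `σ²`, the scaled
empirical variance `V_n = (n/(n−1))(∑ Z_i² − (1/n)(∑ Z_i)²)` satisfies, for any
`n ≥ 2` and `δ > 0`, `V_n ≤ 4nσ² + 8 ln(1/δ)` with probability at least `1 − δ`. -/
theorem stmt6 {Ω : Type*} [MeasurableSpace Ω] (μ : Measure Ω) [IsProbabilityMeasure μ]
    (Z : ℕ → Ω → ℝ) (hmeas : ∀ i, Measurable (Z i))
    (hindep : iIndepFun Z μ)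
    (hident : ∀ i, IdentDistrib (Z i) (Z 0) μ μ)
    (hbdd : ∀ i ω, |Z i ω| ≤ 2) (hmean : μ[Z 0] = 0)
    (n : ℕ) (hn : 2 ≤ n) (δ : ℝ) (hδ : 0 < δ) :
    ENNReal.ofReal (1 - δ) ≤
      μ {ω | ((n : ℝ) / ((n : ℝ) - 1)) *
          ((∑ i ∈ Finset.range n, (Z i ω) ^ 2) -
            (1 / (n : ℝ)) * (∑ i ∈ Finset.range n, Z i ω) ^ 2) ≤
          4 * (n : ℝ) * variance (Z 0) μ + 8 * Real.log (1 / δ)} :=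
  stmt6_general μ Z hindep hident hbdd hmean n hn δ hδ
end

section
/- Let d be a positive integer, m ≥ 2 an integer, γ ≥ 1, and K > 0. Define h(x̃) = ∏_{i=1}^{d−1} exp(−1/(1 − 4x_i²))·1[|x_i| < 1/2] for x̃ ∈ ℝ^{d−1}, and for l ∈ L = {0, 1/m, ..., (m−1)/m}^{d−1} define φ_l(x̃) = K·m^{−γ}·h(m(x̃ − l) − 1/2) (componentwise). Then the supports of φ_{l₁} and φ_{l₂} are disjoint for distinct l₁, l₂ ∈ L, and for ω, ω' ∈ {0,1}^{L}, the L¹ distance between g_ω = ∑_l ω_l φ_l and g_{ω'} = ∑_l ω'_l φ_l equals ‖ω − ω'‖₀ · K·m^{−γ−(d−1)}·‖h‖₁, where ‖ω − ω'‖₀ is the Hamming distance and ‖h‖₁ = ∫_{[0,1]^{d−1}} h. -/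
open scoped BigOperators

open MeasureTheory

/-- The base bump function. -/
noncomputable def stmt15H (n : ℕ) : (Fin n → ℝ) → ℝ :=
  fun x => ∏ i, if |x i| < 1 / 2 then Real.exp (-(1 / (1 - 4 * (x i) ^ 2))) else 0

lemma stmt15H_nonneg {n : ℕ} (x : Fin n → ℝ) : 0 ≤ stmt15H n x :=
  Finset.prod_nonneg fun i _ => by split <;> positivity

lemma stmt15H_le_one {n : ℕ} (x : Fin n → ℝ) : stmt15H n x ≤ 1 :=
  Finset.prod_le_one (fun i _ => by split <;> positivity)
    (fun i _ => by
      split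
      · rename_i hlt
        have h1 : (x i) ^ 2 < (1/2 : ℝ) ^ 2 := by
          have := abs_nonneg (x i)
          nlinarith [sq_abs (x i), abs_nonneg (x i)]
        have h2 : (0:ℝ) < 1 - 4 * (x i) ^ 2 := by nlinarith
        have : 0 ≤ 1 / (1 - 4 * (x i) ^ 2) := by positivity
        calc Real.exp (-(1 / (1 - 4 * (x i) ^ 2))) ≤ Real.exp 0 :=
              Real.exp_le_exp.2 (by linarith)
          _ = 1 := Real.exp_zero
      · exact zero_le_one)

lemma stmt15H_measurable {n : ℕ} : Measurable (stmt15H n) := by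
  apply Finset.measurable_prod
  intro i _
  apply Measurable.ite
  · exact measurableSet_lt ((measurable_pi_apply i).abs) measurable_const
  · exact (Real.measurable_exp.comp
      (((measurable_const.div ((measurable_const.sub
        (((measurable_pi_apply i).pow_const 2).const_mul 4))))).neg))
  · exact measurable_const

lemma stmt15H_ne_zero {n : ℕ} {x : Fin n → ℝ} (hx : stmt15H n x ≠ 0) (i : Fin n) :
    |x i| < 1 / 2 := by
  by_contra hc
  exact hx (Finset.prod_eq_zero (Finset.mem_univ i) (if_neg hc))

lemma stmt15_nat_eq {a b : ℕ} {t : ℝ} (h1 : (a : ℝ) < t) (h2 : t < a + 1)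
    (h3 : (b : ℝ) < t) (h4 : t < b + 1) : a = b := by
  by_contra hne
  rcases Nat.lt_or_ge a b with hab | hab
  · have : (a : ℝ) + 1 ≤ b := by exact_mod_cast hab
    linarith
  · have hba : b < a := lt_of_le_of_ne hab (Ne.symm hne)
    have : (b : ℝ) + 1 ≤ a := by exact_mod_cast hba
    linarith

/-- Bump functions `φ_l(x̃) = K m^{−γ} h(m(x̃ − l) − 1/2)` built from
`h(x̃) = ∏ᵢ exp(−1/(1−4xᵢ²))·1[|xᵢ|<1/2]` on the grid `{0,1/m,…,(m−1)/m}^{d−1}`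
have pairwise disjoint supports, and the L¹ distance between the bump sums
`g_ω = ∑ ω_l φ_l` and `g_{ω'}` equals
`‖ω − ω'‖₀ · K m^{−γ−(d−1)} ‖h‖₁`. Here the domain dimension is `n = d − 1`. -/
theorem stmt15 (n m : ℕ) (hm : 2 ≤ m) (γ K : ℝ) (hγ : 1 ≤ γ) (hK : 0 < K)
    (h : (Fin n → ℝ) → ℝ)
    (hh : h = fun x => ∏ i, if |x i| < 1 / 2 then Real.exp (-(1 / (1 - 4 * (x i) ^ 2))) else 0)
    (φ : (Fin n → Fin m) → (Fin n → ℝ) → ℝ)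
    (hφ : ∀ c x, φ c x = K * (m : ℝ) ^ (-γ) * h (fun i => m * (x i - (c i : ℝ) / m) - 1 / 2)) :
    (∀ c c' : Fin n → Fin m, c ≠ c' →
      Function.support (φ c) ∩ Function.support (φ c') = ∅) ∧
    (∀ ω ω' : (Fin n → Fin m) → Bool,
      (∫ x in Set.Icc (0 : Fin n → ℝ) 1,
          |(∑ c, (if ω c then (1 : ℝ) else 0) * φ c x) -
            (∑ c, (if ω' c then (1 : ℝ) else 0) * φ c x)|) =
        (hammingDist ω ω' : ℝ) * K * (m : ℝ) ^ (-γ - (n : ℝ)) *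
          ∫ x : Fin n → ℝ, h x) := by
  have hH : h = stmt15H n := hh
  subst hH
  have hm0 : (0:ℝ) < m := by positivity
  have hmne : (m:ℝ) ≠ 0 := ne_of_gt hm0
  have hKm : (0:ℝ) < K * (m : ℝ) ^ (-γ) := by positivity
  -- bounds from nonvanishing
  have hbound : ∀ (c : Fin n → Fin m) (x : Fin n → ℝ), φ c x ≠ 0 →
      ∀ i, (c i : ℝ) < m * x i ∧ m * x i < (c i : ℝ) + 1 := by
    intro c x hx i
    rw [hφ] at hx
    have hH0 : stmt15H n (fun i => m * (x i - (c i : ℝ) / m) - 1 / 2) ≠ 0 := by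
      intro h0; exact hx (by rw [h0, mul_zero])
    have := stmt15H_ne_zero hH0 i
    have harg : m * (x i - (c i : ℝ) / m) = m * x i - c i := by field_simp
    rw [abs_lt] at this
    constructor <;> nlinarith [this.1, this.2]
  have disj : ∀ c c' : Fin n → Fin m, c ≠ c' →
      Function.support (φ c) ∩ Function.support (φ c') = ∅ := by
    intro c c' hne
    ext x
    simp only [Set.mem_inter_iff, Function.mem_support, Set.mem_empty_iff_false, iff_false,
      not_and]
    intro h1 h2
    apply hne
    funext i
    have b1 := hbound c x h1 i
    have b2 := hbound c' x h2 i
    exact Fin.ext (stmt15_nat_eq b1.1 b1.2 b2.1 b2.2)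
  refine ⟨disj, ?_⟩
  intro ω ω'
  classical
  set ε : (Fin n → Fin m) → ℝ :=
    fun c => (if ω c then (1:ℝ) else 0) - (if ω' c then (1:ℝ) else 0) with hε
  have hφnonneg : ∀ c x, 0 ≤ φ c x := by
    intro c x
    rw [hφ]
    exact mul_nonneg hKm.le (stmt15H_nonneg _)
  have hφle : ∀ c x, φ c x ≤ K * (m : ℝ) ^ (-γ) := by
    intro c x
    rw [hφ]
    calc K * (m : ℝ) ^ (-γ) * stmt15H n _ ≤ K * (m : ℝ) ^ (-γ) * 1 := by
          exact mul_le_mul_of_nonneg_left (stmt15H_le_one _) hKm.le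
      _ = K * (m : ℝ) ^ (-γ) := mul_one _
  -- measurability of φ c
  have hφmeas : ∀ c, Measurable (φ c) := by
    intro c
    have : Measurable fun x : Fin n → ℝ => (fun i => m * (x i - (c i : ℝ) / m) - 1 / 2) := by
      apply measurable_pi_lambda
      intro i
      exact (((measurable_pi_apply i).sub measurable_const).const_mul _).sub measurable_const
    have h2 : φ c = fun x => K * (m : ℝ) ^ (-γ) *
        stmt15H n (fun i => m * (x i - (c i : ℝ) / m) - 1 / 2) := funext fun x => hφ c x
    rw [h2]
    exact (stmt15H_measurable.comp this).const_mul _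
  -- pointwise: |∑ ε c * φ c x| = ∑ |ε c| * φ c x
  have hpoint : ∀ x, |∑ c, ε c * φ c x| = ∑ c, |ε c| * φ c x := by
    intro x
    by_cases hex : ∃ c0, φ c0 x ≠ 0
    · obtain ⟨c0, hc0⟩ := hex
      have hz : ∀ c, c ≠ c0 → φ c x = 0 := by
        intro c hc
        by_contra hc'
        have : x ∈ Function.support (φ c) ∩ Function.support (φ c0) := ⟨hc', hc0⟩
        rw [disj c c0 hc] at this
        exact this
      rw [Finset.sum_eq_single c0 (fun b _ hb => by rw [hz b hb, mul_zero])
        (fun hb => absurd (Finset.mem_univ c0) hb),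
        Finset.sum_eq_single c0 (fun b _ hb => by rw [hz b hb, mul_zero])
        (fun hb => absurd (Finset.mem_univ c0) hb),
        abs_mul, abs_of_nonneg (hφnonneg c0 x)]
    · push_neg at hex
      simp [hex]
  -- integrability
  have hint : ∀ c, IntegrableOn (φ c) (Set.Icc (0 : Fin n → ℝ) 1) := by
    intro c
    apply Measure.integrableOn_of_bounded (M := K * (m : ℝ) ^ (-γ))
      isCompact_Icc.measure_lt_top.ne (hφmeas c).aestronglyMeasurable
    filter_upwards with x
    rw [Real.norm_eq_abs, abs_of_nonneg (hφnonneg c x)]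
    exact hφle c x
  -- value of ∫ φ c over the box
  have hval : ∀ c, (∫ x in Set.Icc (0 : Fin n → ℝ) 1, φ c x) =
      K * (m : ℝ) ^ (-γ) * (((m:ℝ) ^ n)⁻¹ * ∫ x, stmt15H n x) := by
    intro c
    have hsupp : ∀ x, x ∉ Set.Icc (0 : Fin n → ℝ) 1 → φ c x = 0 := by
      intro x hx
      by_contra h0
      apply hx
      rw [Set.mem_Icc]
      constructor <;> intro i
      · have := (hbound c x h0 i).1
        have hc0 : (0:ℝ) ≤ (c i : ℝ) := Nat.cast_nonneg _
        show (0:ℝ) ≤ x i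
        nlinarith
      · have := (hbound c x h0 i).2
        have hcm : (c i : ℝ) + 1 ≤ m := by
          have : (c i : ℕ) < m := (c i).isLt
          exact_mod_cast this
        show x i ≤ (1 : ℝ)
        nlinarith
    rw [setIntegral_eq_integral_of_forall_compl_eq_zero hsupp]
    have harg : ∀ x : Fin n → ℝ, (fun i => (m:ℝ) * (x i - (c i : ℝ) / m) - 1 / 2) =
        ((m:ℝ) • x - fun i => (c i : ℝ) + 1 / 2) := by
      intro x
      funext i
      simp only [Pi.sub_apply, Pi.smul_apply, smul_eq_mul]
      field_simp
      ring
    calc (∫ x, φ c x)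
        = ∫ x, K * (m : ℝ) ^ (-γ) *
            stmt15H n ((m:ℝ) • x - fun i => (c i : ℝ) + 1 / 2) := by
          congr 1; funext x; rw [hφ, harg]
      _ = K * (m : ℝ) ^ (-γ) *
            ∫ x, stmt15H n ((m:ℝ) • x - fun i => (c i : ℝ) + 1 / 2) := by
          rw [integral_const_mul]
      _ = K * (m : ℝ) ^ (-γ) * (((m:ℝ) ^ n)⁻¹ * ∫ x, stmt15H n x) := by
          congr 1
          have := MeasureTheory.Measure.integral_comp_smul_of_nonneg
            (μ := volume)
            (fun y : Fin n → ℝ => stmt15H n (y - fun i => (c i : ℝ) + 1 / 2)) (m:ℝ)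
            (hR := hm0.le)
          rw [Module.finrank_fin_fun] at this
          rw [this, MeasureTheory.integral_sub_right_eq_self (stmt15H n)
            (fun i => (c i : ℝ) + 1 / 2), smul_eq_mul]
  -- main computation
  have step1 : ∀ x : Fin n → ℝ,
      |(∑ c, (if ω c then (1 : ℝ) else 0) * φ c x) -
        (∑ c, (if ω' c then (1 : ℝ) else 0) * φ c x)| = ∑ c, |ε c| * φ c x := by
    intro x
    rw [← Finset.sum_sub_distrib]
    have : ∀ c, (if ω c then (1 : ℝ) else 0) * φ c x -
        (if ω' c then (1 : ℝ) else 0) * φ c x = ε c * φ c x := by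
      intro c; rw [hε]; ring
    rw [Finset.sum_congr rfl (fun c _ => this c)]
    exact hpoint x
  calc (∫ x in Set.Icc (0 : Fin n → ℝ) 1,
          |(∑ c, (if ω c then (1 : ℝ) else 0) * φ c x) -
            (∑ c, (if ω' c then (1 : ℝ) else 0) * φ c x)|)
      = ∫ x in Set.Icc (0 : Fin n → ℝ) 1, ∑ c, |ε c| * φ c x := by
        apply integral_congr_ae
        filter_upwards with x
        exact step1 x
    _ = ∑ c, |ε c| * ∫ x in Set.Icc (0 : Fin n → ℝ) 1, φ c x := by
        rw [integral_finset_sum _ (fun c _ => (hint c).const_mul _)]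
        exact Finset.sum_congr rfl fun c _ => integral_const_mul _ _
    _ = (∑ c, |ε c|) * (K * (m : ℝ) ^ (-γ) * (((m:ℝ) ^ n)⁻¹ * ∫ x, stmt15H n x)) := by
        rw [Finset.sum_mul]
        exact Finset.sum_congr rfl fun c _ => by rw [hval c]
    _ = (hammingDist ω ω' : ℝ) * K * (m : ℝ) ^ (-γ - (n : ℝ)) * ∫ x, stmt15H n x := by
        have hsum : (∑ c, |ε c|) = (hammingDist ω ω' : ℝ) := by
          have : ∀ c, |ε c| = if ω c ≠ ω' c then (1:ℝ) else 0 := by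
            intro c
            rw [hε]
            rcases Bool.eq_false_or_eq_true (ω c) with h1 | h1 <;>
              rcases Bool.eq_false_or_eq_true (ω' c) with h2 | h2 <;>
              simp [h1, h2]
          rw [Finset.sum_congr rfl (fun c _ => this c), Finset.sum_boole]
          rfl
        have hpow : (m : ℝ) ^ (-γ - (n : ℝ)) = (m : ℝ) ^ (-γ) * ((m:ℝ) ^ n)⁻¹ := by
          rw [Real.rpow_sub hm0, Real.rpow_natCast, div_eq_mul_inv]
        rw [hsum, hpow]
        ring
end

section
/- For all sufficiently large integers d, there exists a subset M ⊆ {0,1}^d such that: (i) |M| ≥ 2^{d/48}; (ii) any two distinct v, v' ∈ M satisfy Hamming distance ‖v − v'‖₀ > d/12; (iii) for every coordinate i ∈ {1,...,d}, 1/24 ≤ (1/|M|)·∑_{v ∈ M} v_i ≤ 3/24. -/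
/-!
Work with words over `ℤ/12` in blocks of length `n = ⌊d/12⌋`. A maximal code in `(ℤ/12)ⁿ` that is
closed under adding constant vectors and has minimum distance `> n/2` covers the space with
radius `n/2`, so the Hamming-ball bound leaves it at least `3^(n/2)` words; closure under constant
shifts makes every symbol occur in exactly `1/12` of the codewords at every position. One-hot
encoding each symbol into 12 bits doubles distances and turns these frequencies into coordinate
averages `1/12`, and precomposing with a surjection `Fin d → Fin n × ℤ/12` pads to length `d`
without decreasing distances or changing averages.
-/

open Finset Function

section Hamming

variable {ι G : Type*} [Fintype ι] [DecidableEq ι] [Fintype G] [DecidableEq G]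

lemma card_filter_hammingDist_le [Nonempty G] (x : ι → G) (r : ℕ) :
    #{y : ι → G | hammingDist x y ≤ r} ≤ 2 ^ Fintype.card ι * Fintype.card G ^ r := by
  let agreeOff (D : Finset ι) : Finset (ι → G) :=
    Fintype.piFinset fun i => if i ∈ D then univ else {x i}
  have hsub : ({y | hammingDist x y ≤ r} : Finset (ι → G)) ⊆
      {D ∈ (univ : Finset ι).powerset | #D ≤ r}.biUnion agreeOff := by
    intro y hy
    rw [mem_filter] at hy
    refine mem_biUnion.2
      ⟨({i | x i ≠ y i} : Finset ι), by simpa [hammingDist] using hy.2, ?_⟩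
    simp only [agreeOff, Fintype.mem_piFinset]
    intro i
    split_ifs with h
    · exact mem_univ _
    · simp_all
  calc #{y : ι → G | hammingDist x y ≤ r}
      ≤ ∑ D ∈ {D ∈ (univ : Finset ι).powerset | #D ≤ r}, #(agreeOff D) :=
        (card_le_card hsub).trans card_biUnion_le
    _ ≤ ∑ _D ∈ {D ∈ (univ : Finset ι).powerset | #D ≤ r}, Fintype.card G ^ r := by
      refine sum_le_sum fun D hD => ?_
      simp only [agreeOff, Fintype.card_piFinset, apply_ite card, card_univ, card_singleton]
      rw [prod_ite_mem, univ_inter, prod_const]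
      exact Nat.pow_le_pow_right Fintype.card_pos (mem_filter.1 hD).2
    _ ≤ 2 ^ Fintype.card ι * Fintype.card G ^ r := by
      rw [sum_const, smul_eq_mul]
      gcongr
      exact (card_filter_le _ _).trans (by simp)

lemma pow_card_le_card_mul_of_covering [Nonempty G] {C : Finset (ι → G)} {r : ℕ}
    (hcov : ∀ x, ∃ c ∈ C, hammingDist c x ≤ r) :
    Fintype.card G ^ Fintype.card ι ≤ #C * (2 ^ Fintype.card ι * Fintype.card G ^ r) :=
  calc Fintype.card G ^ Fintype.card ι = #(univ : Finset (ι → G)) := by simp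
    _ ≤ #(C.biUnion fun c => {y | hammingDist c y ≤ r}) :=
        card_le_card fun x _ => by simpa using hcov x
    _ ≤ ∑ c ∈ C, #{y : ι → G | hammingDist c y ≤ r} := card_biUnion_le
    _ ≤ #C * (2 ^ Fintype.card ι * Fintype.card G ^ r) :=
        (sum_le_sum fun c _ => card_filter_hammingDist_le c r).trans_eq (by simp)

end Hamming

section ShiftInvariant

variable {ι G : Type*} [AddCommGroup G]

def IsShiftInvariant (C : Finset (ι → G)) : Prop :=
  ∀ c ∈ C, ∀ a : G, c + const ι a ∈ C

section Fintype

variable [Fintype ι] [DecidableEq G]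

lemma hammingDist_add_const (x y : ι → G) (a : G) :
    hammingDist (x + const ι a) y = hammingDist x (y + const ι (-a)) := by
  unfold hammingDist
  exact congrArg card (filter_congr fun i _ => by simp [eq_add_neg_iff_add_eq])

lemma hammingDist_add_const_add_const (x : ι → G) {a b : G} (hab : a ≠ b) :
    hammingDist (x + const ι a) (x + const ι b) = Fintype.card ι := by
  simp [hammingDist, hab]

variable [Fintype G]

lemma IsShiftInvariant.union_image_add_const {C : Finset (ι → G)} (hC : IsShiftInvariant C)
    (x : ι → G) : IsShiftInvariant (C ∪ univ.image (x + const ι ·)) := by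
  intro c hc a
  rcases mem_union.1 hc with hc | hc
  · exact mem_union_left _ (hC c hc a)
  · obtain ⟨b, -, rfl⟩ := mem_image.1 hc
    exact mem_union_right _ (mem_image.2 ⟨b + a, mem_univ _, by ext; simp [add_assoc]⟩)

lemma pairwise_union_image_add_const {C : Finset (ι → G)} {r : ℕ} (hr : r < Fintype.card ι)
    (hC : IsShiftInvariant C) (hsep : (C : Set (ι → G)).Pairwise (r < hammingDist · ·))
    {x : ι → G} (hfar : ∀ c ∈ C, r < hammingDist c x) :
    ((C ∪ univ.image (x + const ι ·) : Finset (ι → G)) : Set (ι → G)).Pairwise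
      (r < hammingDist · ·) := by
  have hfar' : ∀ c ∈ C, ∀ a, r < hammingDist (x + const ι a) c := fun c hc a => by
    rw [hammingDist_add_const, hammingDist_comm]
    exact hfar _ (hC c hc (-a))
  rw [coe_union, Set.pairwise_union]
  refine ⟨hsep, ?_, ?_⟩
  · rintro _ hy _ hz hne
    obtain ⟨a, -, rfl⟩ := mem_image.1 hy
    obtain ⟨b, -, rfl⟩ := mem_image.1 hz
    rw [hammingDist_add_const_add_const x fun hab => hne (by rw [hab])]
    exact hr
  · rintro c hc _ hy -
    obtain ⟨a, -, rfl⟩ := mem_image.1 hy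
    exact ⟨hammingDist_comm c _ ▸ hfar' c hc a, hfar' c hc a⟩

theorem exists_isShiftInvariant_covering_code {r : ℕ} (hr : r < Fintype.card ι) :
    ∃ C : Finset (ι → G), IsShiftInvariant C ∧
      (C : Set (ι → G)).Pairwise (r < hammingDist · ·) ∧ ∀ x, ∃ c ∈ C, hammingDist c x ≤ r := by
  classical
  obtain ⟨C, hC, hmax⟩ := exists_max_image
    {C : Finset (ι → G) | IsShiftInvariant C ∧ (C : Set (ι → G)).Pairwise (r < hammingDist · ·)}
    card ⟨∅, mem_filter.2 ⟨mem_univ _, by simp [IsShiftInvariant]⟩⟩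
  rw [mem_filter] at hC
  refine ⟨C, hC.2.1, hC.2.2, fun x => ?_⟩
  by_contra! hfar
  have hx : x ∉ C := fun hx => by simpa using hfar x hx
  have hbigger := hmax _ <| mem_filter.2 ⟨mem_univ _, hC.2.1.union_image_add_const x,
    pairwise_union_image_add_const hr hC.2.1 hC.2.2 hfar⟩
  refine hbigger.not_gt (card_lt_card ⟨subset_union_left, fun h => hx (h ?_)⟩)
  exact mem_union_right _ (mem_image.2 ⟨0, mem_univ _, by simp⟩)

end Fintype

variable [Fintype G] [DecidableEq G]

lemma IsShiftInvariant.card_mul_card_filter_eq {C : Finset (ι → G)} (hC : IsShiftInvariant C)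
    (j : ι) (s : G) : Fintype.card G * #{c ∈ C | c j = s} = #C := by
  have hfiber (t : G) : #{c ∈ C | c j = t} = #{c ∈ C | c j = s} := by
    refine card_nbij' (· + const ι (s - t)) (· + const ι (t - s)) ?_ ?_ ?_ ?_
    · intro c hc
      simp only [coe_filter, Set.mem_ofPred_eq] at hc ⊢
      exact ⟨hC c hc.1 _, by simp [hc.2]⟩
    · intro c hc
      simp only [coe_filter, Set.mem_ofPred_eq] at hc ⊢
      exact ⟨hC c hc.1 _, by simp [hc.2]⟩
    · intro c _; ext; simp [add_assoc]
    · intro c _; ext; simp [add_assoc]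
  rw [card_eq_sum_card_fiberwise (s := C) (f := (· j)) (t := univ) fun _ _ => mem_univ _,
    sum_congr rfl fun t _ => hfiber t, sum_const, card_univ, smul_eq_mul]

lemma IsShiftInvariant.card_filter_div_card {C : Finset (ι → G)} (hC : IsShiftInvariant C)
    (hne : C.Nonempty) (j : ι) (s : G) :
    (#{c ∈ C | c j = s} : ℝ) / #C = (Fintype.card G : ℝ)⁻¹ := by
  have hcard := hC.card_mul_card_filter_eq j s
  have hfiber : #{c ∈ C | c j = s} ≠ 0 := fun h0 =>
    hne.card_pos.ne' (by rw [← hcard, h0, mul_zero])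
  rw [← hcard, Nat.cast_mul]
  field_simp

end ShiftInvariant

section OneHot

variable {ι G : Type*} [DecidableEq G]

def oneHot (c : ι → G) : ι × G → Bool := fun p => decide (c p.1 = p.2)

lemma card_filter_decide_eq_ne_decide_eq [Fintype G] (a b : G) :
    #{g | decide (a = g) ≠ decide (b = g)} = if a = b then 0 else 2 := by
  split_ifs with hab
  · simp [hab]
  · rw [← card_pair hab]
    congr 1
    ext g
    by_cases ha : a = g <;> by_cases hb : b = g <;> simp_all [eq_comm]

lemma hammingDist_oneHot [Fintype ι] [Fintype G] (c c' : ι → G) :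
    hammingDist (oneHot c) (oneHot c') = 2 * hammingDist c c' := by
  simp only [hammingDist, card_filter, Fintype.sum_prod_type, mul_sum]
  refine sum_congr rfl fun j _ => ?_
  rw [← card_filter]
  simpa [oneHot, apply_ite (2 * ·)] using card_filter_decide_eq_ne_decide_eq (c j) (c' j)

end OneHot

lemma hammingDist_le_hammingDist_comp {ι κ β : Type*} [Fintype ι] [Fintype κ] [DecidableEq β]
    {φ : κ → ι} (hφ : Surjective φ) (x y : ι → β) :
    hammingDist x y ≤ hammingDist (x ∘ φ) (y ∘ φ) :=
  card_le_card_of_surjOn φ fun i hi => by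
    obtain ⟨k, rfl⟩ := hφ i
    exact ⟨k, by simpa using hi, rfl⟩

lemma exists_surjective_of_card_le {α β : Type*} [Fintype α] [Fintype β] [Nonempty β]
    (h : Fintype.card β ≤ Fintype.card α) : ∃ f : α → β, Surjective f :=
  exists_surjective_iff.2 ⟨inferInstance, Function.Embedding.nonempty_of_card_le h⟩

lemma Real.rpow_div_le_of_pow_le {a x : ℝ} (ha : 0 ≤ a) (hx : 0 ≤ x) {d m : ℕ} (hm : m ≠ 0)
    (h : a ^ d ≤ x ^ m) : a ^ ((d : ℝ) / m) ≤ x :=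
  calc a ^ ((d : ℝ) / m) = (a ^ d) ^ ((m : ℝ)⁻¹) := by
        rw [div_eq_mul_inv, Real.rpow_mul ha, Real.rpow_natCast]
    _ ≤ (x ^ m) ^ ((m : ℝ)⁻¹) := by gcongr
    _ = x := Real.pow_rpow_inv_natCast hx hm

lemma pow_le_sq_of_le_mul_pow_half {q n K : ℕ} (hq : 0 < q)
    (h : q ^ n ≤ K * (2 ^ n * q ^ (n / 2))) : q ^ n ≤ (K * 2 ^ n) ^ 2 := by
  have hhalf : q ^ (n / 2) * q ^ (n / 2) ≤ q ^ n := by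
    rw [← pow_add]
    exact Nat.pow_le_pow_right hq (by omega)
  refine Nat.le_of_mul_le_mul_right ?_ (pow_pos hq n)
  calc q ^ n * q ^ n ≤ (K * (2 ^ n * q ^ (n / 2))) * (K * (2 ^ n * q ^ (n / 2))) :=
        Nat.mul_le_mul h h
    _ = (K * 2 ^ n) ^ 2 * (q ^ (n / 2) * q ^ (n / 2)) := by ring
    _ ≤ (K * 2 ^ n) ^ 2 * q ^ n := by gcongr

lemma two_rpow_div_48_le {n d K : ℕ} (hn : 1 ≤ n) (hd : d < 12 * (n + 1))
    (hK : 12 ^ n ≤ K * (2 ^ n * 12 ^ (n / 2))) : (2 : ℝ) ^ ((d : ℝ) / 48) ≤ K := by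
  have h3 : 3 ^ n ≤ K ^ 2 := by
    have h12 := pow_le_sq_of_le_mul_pow_half (by norm_num) hK
    rw [mul_pow, ← pow_mul, mul_comm n, pow_mul, show (12 : ℕ) = 3 * 2 ^ 2 by rfl, mul_pow]
      at h12
    exact Nat.le_of_mul_le_mul_right h12 (by positivity)
  have h2 : 2 ^ d ≤ K ^ 48 :=
    calc 2 ^ d ≤ 2 ^ (24 * n) := Nat.pow_le_pow_right (by norm_num) (by omega)
      _ ≤ 3 ^ (24 * n) := Nat.pow_le_pow_left (by norm_num) _
      _ = (3 ^ n) ^ 24 := by rw [← pow_mul, mul_comm]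
      _ ≤ (K ^ 2) ^ 24 := Nat.pow_le_pow_left h3 _
      _ = K ^ 48 := by rw [← pow_mul]
  exact Real.rpow_div_le_of_pow_le zero_le_two K.cast_nonneg (by norm_num) (by exact_mod_cast h2)

/-- For all sufficiently large `d` there is a set `M ⊆ {0,1}^d` with
`|M| ≥ 2^{d/48}`, pairwise Hamming distances `> d/12`, and every coordinate
average in `[1/24, 3/24]`. -/
theorem stmt16 :
    ∃ d₀ : ℕ, ∀ d : ℕ, d₀ ≤ d →
      ∃ M : Finset (Fin d → Bool),
        (2 : ℝ) ^ ((d : ℝ) / 48) ≤ M.card ∧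
        (∀ v ∈ M, ∀ v' ∈ M, v ≠ v' → (d : ℝ) / 12 < (hammingDist v v' : ℝ)) ∧
        (∀ i : Fin d,
          1 / 24 ≤ (∑ v ∈ M, if v i then (1 : ℝ) else 0) / M.card ∧
          (∑ v ∈ M, if v i then (1 : ℝ) else 0) / M.card ≤ 3 / 24) := by
  refine ⟨12, fun d hd => ?_⟩
  obtain ⟨n, hn, hnd, hdn⟩ : ∃ n, 1 ≤ n ∧ 12 * n ≤ d ∧ d < 12 * (n + 1) :=
    ⟨d / 12, by omega, by omega, by omega⟩
  obtain ⟨C, hinv, hsep, hcov⟩ :=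
    exists_isShiftInvariant_covering_code (ι := Fin n) (G := ZMod 12) (r := n / 2)
      (by simp; omega)
  have : NeZero n := ⟨by omega⟩
  obtain ⟨φ, hφ⟩ : ∃ φ : Fin d → Fin n × ZMod 12, Surjective φ :=
    exists_surjective_of_card_le (by simp; omega)
  have hdist (c c' : Fin n → ZMod 12) :
      2 * hammingDist c c' ≤ hammingDist (oneHot c ∘ φ) (oneHot c' ∘ φ) :=
    hammingDist_oneHot c c' ▸ hammingDist_le_hammingDist_comp hφ _ _
  have hinj : Injective fun c => oneHot c ∘ φ := fun c c' h => by simpa [h] using hdist c c'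
  have hne : C.Nonempty := let ⟨c, hc, _⟩ := hcov 0; ⟨c, hc⟩
  refine ⟨C.image (oneHot · ∘ φ), ?_, ?_, fun i => ?_⟩
  · rw [card_image_of_injective _ hinj]
    exact two_rpow_div_48_le hn hdn (by simpa using pow_card_le_card_mul_of_covering hcov)
  · simp only [mem_image]
    rintro _ ⟨c, hc, rfl⟩ _ ⟨c', hc', rfl⟩ hcc'
    have hsepcc := hsep hc hc' fun h => hcc' (by rw [h])
    have hdistcc := hdist c c'
    rw [div_lt_iff₀ (by norm_num)]
    exact_mod_cast (by omega : d < hammingDist (oneHot c ∘ φ) (oneHot c' ∘ φ) * 12)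
  · rw [sum_image fun c _ c' _ h => hinj h, sum_boole, card_image_of_injective _ hinj]
    simp only [comp_apply, oneHot, decide_eq_true_eq]
    rw [hinv.card_filter_div_card hne]
    norm_num
end

section
/- Let X₁, X₂, ... be i.i.d. with |X₁| ≤ 2, E X₁ = 0, Var(X₁) = σ² ≤ 4, and for n ≥ 2 let V_n = (n/(n−1))(∑_{i=1}^n X_i² − (1/n)(∑_{i=1}^n X_i)²). Then there is an absolute constant K₃ such that for any 0 < δ < 1, with probability at least 1 − δ, simultaneously for all n ≥ ln(1/δ): nσ² ≤ K₃·(1 + ln(1/δ) + V_n). -/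
/-!
Pair the observations: the variables `Y k = (X (2k) - X (2k+1))² / 2` are independent, take
values in `[0, 8]` and have mean `σ²`, and `∑_{k<m} Y k ≤ V_n` as soon as `2m ≤ n`, because
`(a - b)² / 2 ≤ (a - c)² + (b - c)²` with `c` the sample mean. A Chernoff bound for the lower
tail of a sum of bounded nonnegative independent variables gives
`P(∑_{k<m} Y k ≤ mσ²/2) ≤ exp(-mσ²/128)`, and a union bound over the dyadic sizes
`m = m₀ 2^k`, where `m₀σ² ≈ 128 (1 + ln(1/δ))`, costs at most `δ`. Outside the exceptional
event, an `n` with `n/2 ≥ m₀` has a dyadic size `M ≤ n/2 < 2M`, whence `nσ² ≤ 6Mσ² < 12 V_n`;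
a smaller `n` has `nσ² ≤ 2m₀σ² = O(1 + ln(1/δ))`.
-/

open MeasureTheory ProbabilityTheory Finset Real

noncomputable def pairSum (x : ℕ → ℝ) (m : ℕ) : ℝ :=
  ∑ k ∈ range m, (x (2 * k) - x (2 * k + 1)) ^ 2 / 2

noncomputable def sampleVar (x : ℕ → ℝ) (n : ℕ) : ℝ :=
  (n : ℝ) / ((n : ℝ) - 1) *
    ((∑ i ∈ range n, x i ^ 2) - (1 / (n : ℝ)) * (∑ i ∈ range n, x i) ^ 2)

section PairSum

variable (x : ℕ → ℝ)

lemma pairSum_mono : Monotone (pairSum x) := fun _ _ h =>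
  sum_le_sum_of_subset_of_nonneg (range_subset_range.mpr h) fun _ _ _ => by positivity

lemma pairSum_le_sum_sq_sub (c : ℝ) (m : ℕ) :
    pairSum x m ≤ ∑ i ∈ range (2 * m), (x i - c) ^ 2 := by
  induction m with
  | zero => simp [pairSum]
  | succ m ih =>
    rw [pairSum, sum_range_succ, ← pairSum, show 2 * (m + 1) = 2 * m + 1 + 1 by ring,
      sum_range_succ, sum_range_succ]
    nlinarith [sq_nonneg (x (2 * m) + x (2 * m + 1) - 2 * c)]

lemma sum_sq_sub_mean_sq {n : ℕ} (hn : n ≠ 0) :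
    ∑ i ∈ range n, (x i - (∑ j ∈ range n, x j) / n) ^ 2
      = (∑ i ∈ range n, x i ^ 2) - (1 / (n : ℝ)) * (∑ i ∈ range n, x i) ^ 2 := by
  have hn' : (n : ℝ) ≠ 0 := Nat.cast_ne_zero.mpr hn
  simp only [sub_sq, sum_add_distrib, sum_sub_distrib, ← sum_mul, ← mul_sum, sum_const,
    card_range, nsmul_eq_mul]
  field_simp
  ring

lemma pairSum_le_sampleVar {m n : ℕ} (hn : 2 ≤ n) (hmn : 2 * m ≤ n) :
    pairSum x m ≤ sampleVar x n := by
  have hD : pairSum x m ≤ ∑ i ∈ range n, (x i - (∑ j ∈ range n, x j) / n) ^ 2 :=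
    (pairSum_le_sum_sq_sub x _ m).trans
      (sum_le_sum_of_subset_of_nonneg (range_subset_range.mpr hmn) fun _ _ _ => sq_nonneg _)
  rw [sum_sq_sub_mean_sq x (by omega)] at hD
  have hpair : 0 ≤ pairSum x m := sum_nonneg fun _ _ => by positivity
  have hn' : (2 : ℝ) ≤ n := by exact_mod_cast hn
  have hfactor : 1 ≤ (n : ℝ) / ((n : ℝ) - 1) := by
    rw [le_div_iff₀ (by linarith)]; linarith
  exact hD.trans (le_mul_of_one_le_left (hpair.trans hD) hfactor)

lemma sampleVar_nonneg {n : ℕ} (hn : 2 ≤ n) : 0 ≤ sampleVar x n := by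
  simpa [pairSum] using pairSum_le_sampleVar x (m := 0) hn (Nat.zero_le n)

lemma exists_mul_two_pow_le_lt {a m : ℕ} (ha : 0 < a) (ham : a ≤ m) :
    ∃ k, a * 2 ^ k ≤ m ∧ m < 2 * (a * 2 ^ k) := by
  have hq : m / a ≠ 0 := (Nat.div_pos ham ha).ne'
  refine ⟨Nat.log 2 (m / a), ?_, ?_⟩
  · calc a * 2 ^ Nat.log 2 (m / a) ≤ a * (m / a) := Nat.mul_le_mul_left _ (Nat.pow_log_le_self 2 hq)
      _ ≤ m := Nat.mul_div_le m a
  · have := (Nat.div_lt_iff_lt_mul ha).mp (Nat.lt_pow_succ_log_self Nat.one_lt_two (m / a))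
    calc m < 2 ^ (Nat.log 2 (m / a) + 1) * a := this
      _ = 2 * (a * 2 ^ Nat.log 2 (m / a)) := by ring

lemma mul_le_of_forall_lt_pairSum {s : ℝ} {m₀ n : ℕ} (hs : 0 ≤ s) (hm₀ : 0 < m₀)
    (hgood : ∀ k, ((m₀ * 2 ^ k : ℕ) : ℝ) * s / 2 < pairSum x (m₀ * 2 ^ k)) (hn : 2 ≤ n) :
    n * s ≤ 2 * m₀ * s + 12 * sampleVar x n := by
  have hV := sampleVar_nonneg x hn
  rcases lt_or_ge (n / 2) m₀ with hsmall | hlarge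
  · have : (n : ℝ) ≤ 2 * m₀ := by exact_mod_cast (by omega : n ≤ 2 * m₀)
    nlinarith
  · obtain ⟨k, hlo, hhi⟩ := exists_mul_two_pow_le_lt hm₀ hlarge
    have hpair : ((m₀ * 2 ^ k : ℕ) : ℝ) * s / 2 < sampleVar x n :=
      (hgood k).trans_le ((pairSum_mono x hlo).trans
        (pairSum_le_sampleVar x hn (Nat.mul_div_le n 2)))
    generalize m₀ * 2 ^ k = M at hhi hpair
    have : (n : ℝ) ≤ 6 * M := by exact_mod_cast (by omega : n ≤ 6 * M)
    nlinarith

end PairSum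

lemma exists_nat_mul_mem_Icc {a s : ℝ} (ha : 0 ≤ a) (hs : 0 < s) :
    ∃ m : ℕ, a ≤ m * s ∧ m * s ≤ a + s := by
  refine ⟨⌈a / s⌉₊, (div_le_iff₀ hs).mp (Nat.le_ceil _), ?_⟩
  calc (⌈a / s⌉₊ : ℝ) * s ≤ (a / s + 1) * s := by
        gcongr; exact (Nat.ceil_lt_add_one (div_nonneg ha hs.le)).le
    _ = a + s := by field_simp

lemma tsum_exp_neg_two_pow_mul_le {c δ : ℝ} (hδ0 : 0 < δ) (hδ1 : δ ≤ 1)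
    (hc : 1 + log (1 / δ) ≤ c) :
    Summable (fun k : ℕ => exp (-(2 ^ k * c))) ∧ ∑' k : ℕ, exp (-(2 ^ k * c)) ≤ δ := by
  have hc0 : 0 < c := by
    have : 0 ≤ log (1 / δ) := log_nonneg (by rw [le_div_iff₀ hδ0]; linarith)
    linarith
  set ρ := exp (-c)
  have hρ : ρ ≤ δ / 2 := by
    have h2 : 2 ≤ exp 1 := by linarith [add_one_le_exp (1 : ℝ)]
    calc ρ ≤ exp (-(1 + log (1 / δ))) := exp_le_exp.mpr (by linarith)
      _ = δ / exp 1 := by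
          rw [neg_add, exp_add, exp_neg, exp_neg, exp_log (by positivity)]; field_simp
      _ ≤ δ / 2 := div_le_div_of_nonneg_left hδ0.le two_pos h2
  have hρ0 : 0 ≤ ρ := (exp_pos _).le
  have hρ1 : ρ < 1 := by linarith
  have hle : ∀ k : ℕ, exp (-(2 ^ k * c)) ≤ ρ * ρ ^ k := by
    intro k
    have hk : (k : ℝ) + 1 ≤ 2 ^ k := by exact_mod_cast Nat.lt_two_pow_self
    rw [← pow_succ', ← exp_nat_mul, exp_le_exp]
    push_cast
    nlinarith
  have hgeom := (summable_geometric_of_lt_one hρ0 hρ1).mul_left ρ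
  have hsum : Summable (fun k : ℕ => exp (-(2 ^ k * c))) :=
    hgeom.of_nonneg_of_le (fun _ => (exp_pos _).le) hle
  refine ⟨hsum, (hsum.tsum_le_tsum hle hgeom).trans ?_⟩
  rw [tsum_mul_left, tsum_geometric_of_lt_one hρ0 hρ1, ← div_eq_mul_inv,
    div_le_iff₀ (by linarith)]
  nlinarith

lemma measurable_iSup_comap {Ω ι β : Type*} [MeasurableSpace β] {X : ι → Ω → β} {S : Set ι}
    {i : ι} (hi : i ∈ S) :
    Measurable[⨆ j ∈ S, MeasurableSpace.comap (X j) inferInstance] (X i) :=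
  measurable_iff_comap_le.mpr
    (le_iSup₂ (f := fun j (_ : j ∈ S) => MeasurableSpace.comap (X j) inferInstance) i hi)

section Probability

variable {Ω : Type*} [MeasurableSpace Ω] {μ : Measure Ω}

lemma ProbabilityTheory.iIndepFun.indepFun_of_measurable_iSup {ι β γ δ : Type*} [MeasurableSpace β]
    [MeasurableSpace γ] [MeasurableSpace δ] {X : ι → Ω → β} (hX : ∀ i, Measurable (X i))
    (h : iIndepFun X μ) {S T : Set ι} (hST : Disjoint S T) {F : Ω → γ} {G : Ω → δ}
    (hF : Measurable[⨆ i ∈ S, MeasurableSpace.comap (X i) ‹_›] F)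
    (hG : Measurable[⨆ i ∈ T, MeasurableSpace.comap (X i) ‹_›] G) :
    IndepFun F G μ := by
  rw [IndepFun_iff_Indep]
  exact indep_of_indep_of_le_right
    (indep_of_indep_of_le_left (indep_iSup_of_disjoint (fun i => (hX i).comap_le) h hST)
      hF.comap_le) hG.comap_le

variable [IsProbabilityMeasure μ]

lemma mgf_neg_le_of_nonneg_of_le {Y : Ω → ℝ} {b t : ℝ} (hY : Measurable Y)
    (h0 : ∀ ω, 0 ≤ Y ω) (hb : ∀ ω, Y ω ≤ b) (ht : 0 ≤ t) (htb : t * b ≤ 1) :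
    mgf Y μ (-t) ≤ exp (-(t * (1 - t * b)) * μ[Y]) := by
  have hYint : Integrable Y μ := Integrable.of_bound hY.aestronglyMeasurable b
    (ae_of_all _ fun ω => by rw [Real.norm_eq_abs, abs_of_nonneg (h0 ω)]; exact hb ω)
  have hexp_int : Integrable (fun ω => exp (-t * Y ω)) μ :=
    integrable_exp_mul_of_mem_Icc hY.aemeasurable (ae_of_all _ fun ω => ⟨h0 ω, hb ω⟩)
  -- `exp u ≤ 1 + u + u²` for `|u| ≤ 1`, and `(t Y)² ≤ t² b Y` because `0 ≤ Y ≤ b`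
  have hpt : ∀ ω, exp (-t * Y ω) ≤ 1 - t * (1 - t * b) * Y ω := by
    intro ω
    have hx : |-t * Y ω| ≤ 1 := by
      rw [abs_le]; constructor <;> nlinarith [h0 ω, hb ω]
    have := (abs_le.mp (abs_exp_sub_one_sub_id_le hx)).2
    nlinarith [h0 ω, hb ω, mul_le_mul_of_nonneg_left (hb ω) (mul_nonneg (mul_nonneg ht ht) (h0 ω))]
  calc mgf Y μ (-t) ≤ μ[fun ω => 1 - t * (1 - t * b) * Y ω] :=
        integral_mono hexp_int ((integrable_const 1).sub (hYint.const_mul _)) hpt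
    _ = 1 + -(t * (1 - t * b)) * μ[Y] := by
        rw [integral_sub (integrable_const 1) (hYint.const_mul _), integral_const_mul]
        simp only [integral_const, probReal_univ, smul_eq_mul, mul_one]
        ring
    _ ≤ exp (-(t * (1 - t * b)) * μ[Y]) := by linarith [add_one_le_exp (-(t * (1 - t * b)) * μ[Y])]

lemma mgf_sum_range_le_pow {Y : ℕ → Ω → ℝ} {t c : ℝ} (hY : ∀ k, Measurable (Y k))
    (hindep : ∀ m, IndepFun (∑ k ∈ range m, Y k) (Y m) μ) (hc : ∀ k, mgf (Y k) μ t ≤ c)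
    (m : ℕ) : mgf (∑ k ∈ range m, Y k) μ t ≤ c ^ m := by
  induction m with
  | zero => simp [mgf_zero_fun]
  | succ m ih =>
    have hsum : Measurable (∑ k ∈ range m, Y k) := by fun_prop
    rw [sum_range_succ, (hindep m).mgf_add' hsum.aestronglyMeasurable
      (hY m).aestronglyMeasurable, pow_succ]
    exact mul_le_mul ih (hc m) mgf_nonneg (mgf_nonneg.trans ih)

lemma measure_sum_range_le_half_le {Y : ℕ → Ω → ℝ} {b s : ℝ} (hb : 0 < b)
    (hY : ∀ k, Measurable (Y k)) (hindep : ∀ m, IndepFun (∑ k ∈ range m, Y k) (Y m) μ)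
    (h0 : ∀ k ω, 0 ≤ Y k ω) (hle : ∀ k ω, Y k ω ≤ b) (hmean : ∀ k, μ[Y k] = s) (m : ℕ) :
    μ {ω | ∑ k ∈ range m, Y k ω ≤ m * s / 2} ≤ ENNReal.ofReal (exp (-(m * s) / (16 * b))) := by
  set t := 1 / (4 * b)
  have hmgf : ∀ k, mgf (Y k) μ (-t) ≤ exp (-(3 / (16 * b)) * s) := by
    intro k
    have htb : t * b ≤ 1 := by rw [div_mul_eq_mul_div, div_le_one (by positivity)]; linarith
    have h := mgf_neg_le_of_nonneg_of_le (μ := μ) (hY k) (h0 k) (hle k) (by positivity) htb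
    rw [hmean k] at h
    convert h using 4
    simp only [t]
    field_simp
    ring
  have hint : Integrable (fun ω => exp (-t * (∑ k ∈ range m, Y k) ω)) μ := by
    refine integrable_exp_mul_of_mem_Icc (a := 0) (b := m * b) (by fun_prop)
      (ae_of_all _ fun ω => ?_)
    rw [Finset.sum_apply]
    refine ⟨sum_nonneg fun k _ => h0 k ω, ?_⟩
    simpa using sum_le_sum fun k (_ : k ∈ range m) => hle k ω
  have hchernoff := measure_le_le_exp_mul_mgf (m * s / 2) (neg_nonpos.mpr (by positivity)) hint
  simp only [Finset.sum_apply] at hchernoff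
  rw [← ofReal_measureReal]
  refine ENNReal.ofReal_le_ofReal (hchernoff.trans ?_)
  calc exp (-(-t) * (m * s / 2)) * mgf (∑ k ∈ range m, Y k) μ (-t)
      ≤ exp (-(-t) * (m * s / 2)) * exp (-(3 / (16 * b)) * s) ^ m :=
        mul_le_mul_of_nonneg_left (mgf_sum_range_le_pow hY hindep hmgf m) (exp_pos _).le
    _ = exp (-(m * s) / (16 * b)) := by
        rw [← exp_nat_mul, ← exp_add]
        congr 1
        simp only [t]
        field_simp
        ring

lemma ProbabilityTheory.IndepFun.integral_sub_sq {U V : Ω → ℝ} (hUV : IndepFun U V μ)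
    (hU : MemLp U 2 μ) (hV : MemLp V 2 μ) (hU0 : μ[U] = 0) (hV0 : μ[V] = 0) :
    μ[fun ω => (U ω - V ω) ^ 2] = variance U μ + variance V μ := by
  have h0 : μ[fun ω => U ω - V ω] = 0 := by
    rw [integral_sub (hU.integrable one_le_two) (hV.integrable one_le_two), hU0, hV0, sub_zero]
  rw [← variance_of_integral_eq_zero (X := fun ω => U ω - V ω)
      (hU.aemeasurable.sub hV.aemeasurable) h0,
    variance_fun_sub hU hV, hUV.covariance_eq_zero hU hV]
  ring

lemma ofReal_one_sub_le_measure {s : Set Ω} {δ : ℝ} (hδ : 0 ≤ δ)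
    (h : μ sᶜ ≤ ENNReal.ofReal δ) : ENNReal.ofReal (1 - δ) ≤ μ s := by
  rw [ENNReal.ofReal_sub 1 hδ, ENNReal.ofReal_one, tsub_le_iff_right]
  calc (1 : ENNReal) = μ (s ∪ sᶜ) := by rw [Set.union_compl_self, measure_univ]
    _ ≤ μ s + μ sᶜ := measure_union_le s sᶜ
    _ ≤ μ s + ENNReal.ofReal δ := add_le_add_right h _

end Probability

section IID

variable {Ω : Type*} [MeasurableSpace Ω] {μ : Measure Ω} [IsProbabilityMeasure μ]
  {X : ℕ → Ω → ℝ}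

lemma measure_pairSum_le_half_le (hmeas : ∀ i, Measurable (X i)) (hindep : iIndepFun X μ)
    (hid : ∀ i, IdentDistrib (X i) (X 0) μ μ) (hbdd : ∀ i ω, |X i ω| ≤ 2) (hmean : μ[X 0] = 0)
    (m : ℕ) :
    μ {ω | pairSum (X · ω) m ≤ m * variance (X 0) μ / 2}
      ≤ ENNReal.ofReal (exp (-(m * variance (X 0) μ) / 128)) := by
  set Y : ℕ → Ω → ℝ := fun k ω => (X (2 * k) ω - X (2 * k + 1) ω) ^ 2 / 2
  have hY : ∀ k, Measurable (Y k) := fun k =>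
    (((hmeas _).sub (hmeas _)).pow_const 2).div_const 2
  have hmemLp : ∀ i, MemLp (X i) 2 μ := fun i =>
    memLp_of_bounded (ae_of_all _ fun ω => abs_le.mp (hbdd i ω)) (hmeas i).aestronglyMeasurable 2
  have hYmean : ∀ k, μ[Y k] = variance (X 0) μ := by
    intro k
    have hX0 : ∀ i, μ[X i] = 0 := fun i => (hid i).integral_eq.trans hmean
    rw [integral_div, (hindep.indepFun (by omega : 2 * k ≠ 2 * k + 1)).integral_sub_sq
      (hmemLp _) (hmemLp _) (hX0 _) (hX0 _), (hid (2 * k)).variance_eq,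
      (hid (2 * k + 1)).variance_eq]
    ring
  have hYindep : ∀ m, IndepFun (∑ k ∈ range m, Y k) (Y m) μ := by
    intro m
    refine iIndepFun.indepFun_of_measurable_iSup hmeas hindep (S := Set.Iio (2 * m))
      (T := {2 * m, 2 * m + 1}) ?_ ?_ ?_
    · refine Set.disjoint_left.mpr fun i hi hi' => ?_
      simp only [Set.mem_Iio, Set.mem_insert_iff, Set.mem_singleton_iff] at hi hi'
      omega
    · rw [Finset.sum_fn]
      refine Finset.measurable_sum _ fun k hk => ?_
      have hk := mem_range.mp hk
      exact (((measurable_iSup_comap (Set.mem_Iio.mpr (by omega))).sub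
        (measurable_iSup_comap (Set.mem_Iio.mpr (by omega)))).pow_const 2).div_const 2
    · exact (((measurable_iSup_comap (by simp)).sub
        (measurable_iSup_comap (by simp))).pow_const 2).div_const 2
  have hYle : ∀ k ω, Y k ω ≤ 8 := fun k ω => by
    have h1 := abs_le.mp (hbdd (2 * k) ω)
    have h2 := abs_le.mp (hbdd (2 * k + 1) ω)
    simp only [Y]
    nlinarith
  calc μ {ω | pairSum (X · ω) m ≤ m * variance (X 0) μ / 2}
      = μ {ω | ∑ k ∈ range m, Y k ω ≤ m * variance (X 0) μ / 2} := rfl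
    _ ≤ ENNReal.ofReal (exp (-(m * variance (X 0) μ) / (16 * 8))) :=
        measure_sum_range_le_half_le (by norm_num) hY hYindep (fun k ω => by positivity) hYle
          hYmean m
    _ = ENNReal.ofReal (exp (-(m * variance (X 0) μ) / 128)) := by norm_num

lemma ofReal_one_sub_le_measure_forall_lt_pairSum (hmeas : ∀ i, Measurable (X i))
    (hindep : iIndepFun X μ) (hid : ∀ i, IdentDistrib (X i) (X 0) μ μ)
    (hbdd : ∀ i ω, |X i ω| ≤ 2) (hmean : μ[X 0] = 0) {δ : ℝ} (hδ0 : 0 < δ) (hδ1 : δ ≤ 1)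
    {m₀ : ℕ} (hm₀ : 128 * (1 + log (1 / δ)) ≤ m₀ * variance (X 0) μ) :
    ENNReal.ofReal (1 - δ) ≤ μ {ω | ∀ k, ((m₀ * 2 ^ k : ℕ) : ℝ) * variance (X 0) μ / 2 <
      pairSum (X · ω) (m₀ * 2 ^ k)} := by
  obtain ⟨hsum, htsum⟩ := tsum_exp_neg_two_pow_mul_le (c := m₀ * variance (X 0) μ / 128)
    hδ0 hδ1 (by linarith)
  refine ofReal_one_sub_le_measure hδ0.le ?_
  have hcompl : {ω | ∀ k, ((m₀ * 2 ^ k : ℕ) : ℝ) * variance (X 0) μ / 2 <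
      pairSum (X · ω) (m₀ * 2 ^ k)}ᶜ = ⋃ k, {ω | pairSum (X · ω) (m₀ * 2 ^ k) ≤
        ((m₀ * 2 ^ k : ℕ) : ℝ) * variance (X 0) μ / 2} := by
    ext ω
    simp
  rw [hcompl]
  calc μ (⋃ k, {ω | pairSum (X · ω) (m₀ * 2 ^ k) ≤
        ((m₀ * 2 ^ k : ℕ) : ℝ) * variance (X 0) μ / 2})
      ≤ ∑' k, μ {ω | pairSum (X · ω) (m₀ * 2 ^ k) ≤
        ((m₀ * 2 ^ k : ℕ) : ℝ) * variance (X 0) μ / 2} := measure_iUnion_le _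
    _ ≤ ∑' k : ℕ, ENNReal.ofReal (exp (-(2 ^ k * (m₀ * variance (X 0) μ / 128)))) :=
        ENNReal.tsum_le_tsum fun k =>
          (measure_pairSum_le_half_le hmeas hindep hid hbdd hmean _).trans_eq
            (by push_cast; ring_nf)
    _ = ENNReal.ofReal (∑' k : ℕ, exp (-(2 ^ k * (m₀ * variance (X 0) μ / 128)))) :=
        (ENNReal.ofReal_tsum_of_nonneg (fun _ => (exp_pos _).le) hsum).symm
    _ ≤ ENNReal.ofReal δ := ENNReal.ofReal_le_ofReal htsum

end IID

/-- There is an absolute constant `K₃` such that for i.i.d. `X_i` with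
`|X_i| ≤ 2`, mean zero and variance `σ² ≤ 4`, with probability at least `1 − δ`,
simultaneously for all `n ≥ ln(1/δ)` (with `n ≥ 2` so that `V_n` is defined):
`nσ² ≤ K₃(1 + ln(1/δ) + V_n)`, where
`V_n = (n/(n−1))(∑_{i<n} X_i² − (1/n)(∑_{i<n} X_i)²)`. -/
theorem stmt18 :
    ∃ K₃ : ℝ, 0 < K₃ ∧
      ∀ (Ω : Type) [MeasurableSpace Ω] (μ : Measure Ω) [IsProbabilityMeasure μ]
        (X : ℕ → Ω → ℝ),
        (∀ i, Measurable (X i)) →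
        iIndepFun X μ →
        (∀ i, IdentDistrib (X i) (X 0) μ μ) →
        (∀ i ω, |X i ω| ≤ 2) →
        μ[X 0] = 0 →
        variance (X 0) μ ≤ 4 →
        ∀ δ : ℝ, 0 < δ → δ < 1 →
          ENNReal.ofReal (1 - δ) ≤
            μ {ω | ∀ n : ℕ, 2 ≤ n → Real.log (1 / δ) ≤ n →
                (n : ℝ) * variance (X 0) μ ≤
                  K₃ * (1 + Real.log (1 / δ) +
                    ((n : ℝ) / ((n : ℝ) - 1)) *
                      ((∑ i ∈ Finset.range n, (X i ω) ^ 2) -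
                        (1 / (n : ℝ)) * (∑ i ∈ Finset.range n, X i ω) ^ 2))} := by
  refine ⟨264, by norm_num, fun Ω _ μ _ X hmeas hindep hid hbdd hmean hvar δ hδ0 hδ1 => ?_⟩
  have hL : 0 ≤ log (1 / δ) := log_nonneg (by rw [le_div_iff₀ hδ0]; linarith)
  rcases (variance_nonneg (X 0) μ).eq_or_lt with hσ | hσ
  · refine le_trans ?_ (measure_mono (s := Set.univ) fun ω _ n hn _ => ?_)
    · rw [measure_univ]
      exact ENNReal.ofReal_le_one.mpr (by linarith)
    · show (n : ℝ) * _ ≤ 264 * (1 + _ + sampleVar (X · ω) n)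
      rw [← hσ, mul_zero]
      linarith [sampleVar_nonneg (X · ω) hn]
  · obtain ⟨m₀, hlo, hhi⟩ := exists_nat_mul_mem_Icc (a := 128 * (1 + log (1 / δ)))
      (by positivity) hσ
    have hm₀ : 0 < m₀ := Nat.pos_of_ne_zero fun h => by
      rw [h, Nat.cast_zero, zero_mul] at hlo
      linarith
    refine (ofReal_one_sub_le_measure_forall_lt_pairSum hmeas hindep hid hbdd hmean hδ0 hδ1.le
      hlo).trans (measure_mono fun ω hω n hn _ => ?_)
    show (n : ℝ) * _ ≤ 264 * (1 + _ + sampleVar (X · ω) n)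
    linarith [mul_le_of_forall_lt_pairSum (X · ω) hσ.le hm₀ hω hn, sampleVar_nonneg (X · ω) hn]
end
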